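/- arXiv:1805.06027 — 11 statements merged into one kernel-verified Lean document; each statement's English description precedes it below -/
import Mathlib

section
/- Let R be a commutative ring and S a commutative subring of the matrix ring M_m(R). For any n×n matrix M with entries in S, viewed as an mn×mn matrix over R, the determinant of M over R equals the determinant over R of the m×m matrix obtained by taking the determinant of M over S. That is, det_R(det_S M) = det_R M. -/
/-- The row-determinant of a square matrix over a not-necessarily-commutative ring:
each product is ordered by row index. Over a commutative ring it agrees with `Matrix.det`. -/
def rowDet {A : Type*} [Ring A] {n : ℕ} (X : Matrix (Fin n) (Fin n) A) : A :=
  ∑ π : Equiv.Perm (Fin n),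
    (Equiv.Perm.sign π : ℤ) • (List.ofFn fun i => X i (π i)).prod

theorem rowDet_eq_det {A : Type*} [CommRing A] {n : ℕ} (X : Matrix (Fin n) (Fin n) A) :
    rowDet X = X.det := by
  rw [← Matrix.det_transpose, Matrix.det_apply, rowDet]
  refine Finset.sum_congr rfl fun π _ => ?_
  rw [List.prod_ofFn, Units.smul_def]
  rfl

theorem det_det_blocks_of_commSubring {R : Type*} [CommRing R] {m n : ℕ}
    (S : Subring (Matrix (Fin m) (Fin m) R))
    (hS : ∀ x y : S, x * y = y * x)
    (M : Matrix (Fin n) (Fin n) S) :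
    Matrix.det ((rowDet M : S) : Matrix (Fin m) (Fin m) R) =
      Matrix.det (Matrix.of fun p q : Fin n × Fin m =>
        ((M p.1 q.1 : Matrix (Fin m) (Fin m) R)) p.2 q.2) := by
  let _ : CommRing S := { S.toRing with mul_comm := hS }
  rw [rowDet_eq_det]
  exact Matrix.det_det M S.subtype
end

section
/- Let R be a commutative ring and A, B, C, D be m×m matrices over R such that C and D commute (CD = DC). Then the determinant of the 2m×2m block matrix [[A, B], [C, D]] over R equals det(AD − BC). -/
open Polynomial Matrix

private lemma det_fromBlocks_mul_detD {S : Type*} [CommRing S] {m : ℕ}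
    (A B C D : Matrix (Fin m) (Fin m) S) (h : C * D = D * C) :
    (Matrix.fromBlocks A B C D).det * D.det = (A * D - B * C).det * D.det := by
  have key : Matrix.fromBlocks A B C D * Matrix.fromBlocks D 0 (-C) 1 =
      Matrix.fromBlocks (A * D - B * C) B 0 D := by
    rw [Matrix.fromBlocks_multiply]
    simp [h, sub_eq_zero, Matrix.mul_neg, sub_eq_add_neg]
  have := congrArg Matrix.det key
  rw [Matrix.det_mul, Matrix.det_fromBlocks_zero₁₂, Matrix.det_fromBlocks_zero₂₁,
    Matrix.det_one, mul_one] at this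
  exact this

theorem det_fromBlocks_of_comm_CD {R : Type*} [CommRing R] {m : ℕ}
    (A B C D : Matrix (Fin m) (Fin m) R) (h : C * D = D * C) :
    (Matrix.fromBlocks A B C D).det = (A * D - B * C).det := by
  -- work over R[X], replacing D by D + X • 1
  let φ : R →+* R[X] := Polynomial.C
  let A' := φ.mapMatrix A
  let B' := φ.mapMatrix B
  let C' := φ.mapMatrix C
  let D' := φ.mapMatrix D + (X : R[X]) • 1
  have hcomm : C' * D' = D' * C' := by
    simp only [D', Matrix.mul_add, Matrix.add_mul, Matrix.mul_smul, Matrix.smul_mul,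
      Matrix.mul_one, Matrix.one_mul, C']
    rw [← map_mul φ.mapMatrix, ← map_mul φ.mapMatrix, h]
  have hD'eq : D' = Matrix.charmatrix (-D) := by
    ext i j
    simp [D', φ, Matrix.charmatrix, Matrix.one_apply, Matrix.diagonal_apply, sub_eq_add_neg,
      add_comm]
  have hmonic : D'.det = (-D).charpoly := by rw [hD'eq]; rfl
  have hreg : IsRegular D'.det := by
    rw [hmonic]; exact ((-D).charpoly_monic).isRegular
  have key := det_fromBlocks_mul_detD A' B' C' D' hcomm
  have hpoly : (Matrix.fromBlocks A' B' C' D').det = (A' * D' - B' * C').det :=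
    hreg.right key
  -- evaluate at 0
  have := congrArg (Polynomial.eval 0) hpoly
  have heval : ∀ {n : Type} [Fintype n] [DecidableEq n] (M : Matrix n n R[X]),
      Polynomial.eval 0 M.det = (M.map (Polynomial.eval 0)).det := fun M => by
    simpa using ((Polynomial.evalRingHom (0 : R)).map_det M)
  simp only [heval] at this
  have hD' : D'.map (Polynomial.eval 0) = D := by
    ext i j; simp [D', φ, Matrix.one_apply]; split <;> simp
  have hmap : ∀ M : Matrix (Fin m) (Fin m) R, (φ.mapMatrix M).map (Polynomial.eval 0) = M := by
    intro M; ext i j; simp [φ]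
  rw [show (Matrix.fromBlocks A' B' C' D').map (Polynomial.eval 0) =
      Matrix.fromBlocks A B C D by
    rw [Matrix.fromBlocks_map, hmap, hmap, hmap, hD']] at this
  have hsub : (A' * D' - B' * C').map (Polynomial.eval 0) = A * D - B * C := by
    have e : (A' * D' - B' * C').map (Polynomial.eval 0)
        = (Polynomial.evalRingHom (0 : R)).mapMatrix (A' * D' - B' * C') := rfl
    rw [e, map_sub, _root_.map_mul, _root_.map_mul]
    simp only [RingHom.mapMatrix_apply, Polynomial.coe_evalRingHom]
    rw [hmap, hmap, hmap, hD']
  rw [hsub] at this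
  exact this
end

section
/- Let R be a commutative ring and A, B, C, D be m×m matrices over R such that AC = CA. Then the determinant of the block matrix [[A, B], [C, D]] equals det(AD − CB). -/
open Matrix Polynomial

lemma aux_key {α : Type*} [CommRing α] {m : ℕ}
    (A B C D : Matrix (Fin m) (Fin m) α) (h : A * C = C * A) :
    A.det * A.det * (Matrix.fromBlocks A B C D).det
      = A.det * A.det * (A * D - C * B).det := by
  have key : Matrix.fromBlocks A 0 (-C) A * Matrix.fromBlocks A B C D
      = Matrix.fromBlocks (A * A) (A * B) 0 (A * D - C * B) := by
    rw [Matrix.fromBlocks_multiply, Matrix.zero_mul, Matrix.zero_mul, add_zero, add_zero,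
      Matrix.neg_mul, Matrix.neg_mul, ← h, neg_add_cancel, neg_add_eq_sub]
  have := congrArg Matrix.det key
  rwa [Matrix.det_mul, Matrix.det_fromBlocks_zero₁₂, Matrix.det_fromBlocks_zero₂₁,
    Matrix.det_mul] at this

theorem det_fromBlocks_of_comm_AC {R : Type*} [CommRing R] {m : ℕ}
    (A B C D : Matrix (Fin m) (Fin m) R) (h : A * C = C * A) :
    (Matrix.fromBlocks A B C D).det = (A * D - C * B).det := by
  classical
  let φ : Matrix (Fin m) (Fin m) R →+* Matrix (Fin m) (Fin m) R[X] :=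
    (Polynomial.C : R →+* R[X]).mapMatrix
  set A' : Matrix (Fin m) (Fin m) R[X] := (X : R[X]) • (1 : Matrix (Fin m) (Fin m) R[X]) + φ A
    with hA'
  have hcomm : A' * φ C = φ C * A' := by
    rw [hA', add_mul, mul_add, Matrix.smul_mul, Matrix.mul_smul, Matrix.one_mul, Matrix.mul_one,
      ← _root_.map_mul φ, ← _root_.map_mul φ, h]
  have hmonic : (A'.det).Monic := by
    have hc : A' = charmatrix (-A) := by
      ext i j
      by_cases hij : i = j <;>
        simp [hA', φ, hij, charmatrix_apply_eq, charmatrix_apply_ne, Matrix.one_apply,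
          sub_eq_add_neg]
    rw [hc]
    exact (-A).charpoly_monic
  have hreg : IsLeftRegular (A'.det * A'.det) :=
    hmonic.isRegular.left.mul hmonic.isRegular.left
  have hpoly : (Matrix.fromBlocks A' (φ B) (φ C) (φ D)).det
      = (A' * φ D - φ C * φ B).det := by
    apply hreg
    simpa [mul_assoc] using aux_key A' (φ B) (φ C) (φ D) hcomm
  have := congrArg (Polynomial.evalRingHom (0 : R)) hpoly
  rw [RingHom.map_det, RingHom.map_det] at this
  simp only [RingHom.mapMatrix_apply] at this
  have hA0 : A'.map (Polynomial.evalRingHom (0 : R)) = A := by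
    ext i j
    simp [hA', φ, Matrix.one_apply, apply_ite]
  have hmap : ∀ M : Matrix (Fin m) (Fin m) R, (φ M).map (Polynomial.evalRingHom (0 : R)) = M := by
    intro M; ext i j; simp [φ]
  have e1 : (A' * φ D - φ C * φ B).map (Polynomial.evalRingHom (0 : R)) = A * D - C * B := by
    rw [Matrix.map_sub _ (map_sub _), Matrix.map_mul, Matrix.map_mul, hA0, hmap, hmap, hmap]
  have e2 : (Matrix.fromBlocks A' (φ B) (φ C) (φ D)).map (Polynomial.evalRingHom (0 : R))
      = Matrix.fromBlocks A B C D := by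
    rw [Matrix.fromBlocks_map, hA0, hmap, hmap, hmap]
  rwa [e1, e2] at this
end

section
/- Let R be a commutative ring and A, B, C, D be m×m matrices over R such that BD = DB. Then the determinant of the block matrix [[A, B], [C, D]] equals det(DA − BC). -/
open Polynomial Matrix

theorem det_fromBlocks_of_comm_BD {R : Type*} [CommRing R] {m : ℕ}
    (A B C D : Matrix (Fin m) (Fin m) R) (h : B * D = D * B) :
    (Matrix.fromBlocks A B C D).det = (D * A - B * C).det := by
  -- work over R[X]
  set φ : R →+* R[X] := Polynomial.C with hφ
  set A' : Matrix (Fin m) (Fin m) R[X] := A.map φ with hA'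
  set B' : Matrix (Fin m) (Fin m) R[X] := B.map φ with hB'
  set C' : Matrix (Fin m) (Fin m) R[X] := C.map φ with hC'
  set D' : Matrix (Fin m) (Fin m) R[X] := D.map φ + (X : R[X]) • 1 with hD'
  have hmapmul : ∀ M N : Matrix (Fin m) (Fin m) R, (M * N).map φ = M.map φ * N.map φ := by
    intro M N
    simpa using (RingHom.mapMatrix (n := Fin m) φ).map_mul M N
  have hcomm : B' * D' = D' * B' := by
    rw [hB', hD', Matrix.mul_add, Matrix.add_mul, ← hmapmul, ← hmapmul, h,
      Matrix.mul_smul, Matrix.smul_mul, Matrix.mul_one, Matrix.one_mul]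
  have hDmon : D'.det.Monic := by
    have : D' = (-D).charmatrix := by
      rw [charmatrix, map_neg, sub_neg_eq_add, hD', add_comm]
      congr 1
      simp [Matrix.scalar, Matrix.smul_one_eq_diagonal]
    rw [this]
    exact (-D).charpoly_monic
  -- key identity over R[X]
  have key : D'.det * (Matrix.fromBlocks A' B' C' D').det
      = (D' * A' - B' * C').det * D'.det := by
    have hprod : Matrix.fromBlocks D' (-B') 0 1 * Matrix.fromBlocks A' B' C' D'
        = Matrix.fromBlocks (D' * A' - B' * C') 0 C' D' := by
      rw [Matrix.fromBlocks_multiply]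
      congr 1 <;> simp [hcomm, Matrix.neg_mul, sub_eq_add_neg]
    have := congrArg Matrix.det hprod
    rw [Matrix.det_mul, Matrix.det_fromBlocks_zero₂₁, Matrix.det_fromBlocks_zero₁₂,
      Matrix.det_one, mul_one] at this
    exact this
  have key2 : (Matrix.fromBlocks A' B' C' D').det = (D' * A' - B' * C').det := by
    exact hDmon.isRegular.left (key.trans (mul_comm _ _))
  -- evaluate at 0
  have hev := congrArg (Polynomial.evalRingHom (0 : R)) key2
  set ψ := Polynomial.evalRingHom (0 : R) with hψ
  rw [RingHom.map_det, RingHom.map_det] at hev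
  have e1 : ψ.mapMatrix (Matrix.fromBlocks A' B' C' D') = Matrix.fromBlocks A B C D := by
    ext i j
    cases i <;> cases j <;>
      simp [hA', hB', hC', hD', hφ, hψ, Matrix.one_apply, apply_ite ψ, apply_ite (Polynomial.eval (0:R))]
  have e2 : ψ.mapMatrix (D' * A' - B' * C') = D * A - B * C := by
    rw [map_sub, _root_.map_mul, _root_.map_mul]
    have ed : ψ.mapMatrix D' = D := by
      ext i j
      simp [hD', hφ, hψ, Matrix.one_apply, apply_ite ψ, apply_ite (Polynomial.eval (0:R))]
    have em : ∀ M : Matrix (Fin m) (Fin m) R, ψ.mapMatrix (M.map φ) = M := by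
      intro M; ext i j; simp [hφ, hψ]
    rw [ed, em, em, em]
  rw [e1, e2] at hev
  exact hev
end

section
/- Let R be a commutative ring and A, B, C, D be m×m matrices over R such that AB = BA. Then the determinant of the block matrix [[A, B], [C, D]] equals det(DA − CB). -/
open Matrix Polynomial

lemma key {S : Type*} [CommRing S] {m : ℕ}
    (A B C D : Matrix (Fin m) (Fin m) S) (h : A * B = B * A) :
    A.det ^ (m+1) * (Matrix.fromBlocks A B C D).det
      = A.det ^ (m+1) * (D * A - C * B).det := by
  set a := A.det with ha
  set E := A.adjugate with hE
  have hEA : E * A = a • 1 := A.adjugate_mul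
  have step1 : a ^ m * (Matrix.fromBlocks A B C D).det
      = a * (a • D - C * E * B).det := by
    have hmul : Matrix.fromBlocks 1 0 (-(C * E)) (a • 1) * Matrix.fromBlocks A B C D
        = Matrix.fromBlocks A B 0 (a • D - C * E * B) := by
      rw [Matrix.fromBlocks_multiply]
      simp [Matrix.mul_assoc, hEA, Matrix.neg_mul, Matrix.smul_mul, Matrix.mul_smul,
        sub_eq_neg_add]
    have := congrArg Matrix.det hmul
    rw [Matrix.det_mul, Matrix.det_fromBlocks_zero₁₂, Matrix.det_fromBlocks_zero₂₁] at this
    simp only [Matrix.det_one, one_mul, Matrix.det_smul, Fintype.card_fin, Matrix.det_one,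
      mul_one, smul_eq_mul] at this
    rw [this]
  have step2 : (a • D - C * E * B).det * a = a ^ m * (D * A - C * B).det := by
    have hmul : (a • D - C * E * B) * A = a • (D * A - C * B) := by
      have hEBA : E * (B * A) = a • B := by
        rw [← h, ← Matrix.mul_assoc, hEA, Matrix.smul_mul, Matrix.one_mul]
      rw [Matrix.sub_mul, Matrix.smul_mul, Matrix.mul_assoc (C*E), Matrix.mul_assoc C E,
        hEBA, Matrix.mul_smul, smul_sub]
    have := congrArg Matrix.det hmul
    rw [Matrix.det_mul, Matrix.det_smul, Fintype.card_fin] at this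
    exact this
  calc a ^ (m+1) * (Matrix.fromBlocks A B C D).det
      = a * (a ^ m * (Matrix.fromBlocks A B C D).det) := by ring
    _ = a * (a * (a • D - C * E * B).det) := by rw [step1]
    _ = ((a • D - C * E * B).det * a) * a := by ring
    _ = (a ^ m * (D * A - C * B).det) * a := by rw [step2]
    _ = a ^ (m+1) * (D * A - C * B).det := by ring

theorem det_fromBlocks_of_comm_AB {R : Type*} [CommRing R] {m : ℕ}
    (A B C D : Matrix (Fin m) (Fin m) R) (h : A * B = B * A) :
    (Matrix.fromBlocks A B C D).det = (D * A - C * B).det := by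
  classical
  set φ : R →+* R[X] := Polynomial.C with hφ
  set A' : Matrix (Fin m) (Fin m) R[X] := Matrix.scalar _ X + φ.mapMatrix A with hA'
  set B' := φ.mapMatrix B with hB'
  set C' := φ.mapMatrix C with hC'
  set D' := φ.mapMatrix D with hD'
  have hsc : ∀ M : Matrix (Fin m) (Fin m) R[X],
      Matrix.scalar (Fin m) (X : R[X]) * M = M * Matrix.scalar (Fin m) X := fun M =>
    (Matrix.scalar_commute (X : R[X]) (fun r' => Commute.all _ _) M)
  have hcomm : A' * B' = B' * A' := by
    rw [hA', Matrix.add_mul, Matrix.mul_add, hsc, ← map_mul φ.mapMatrix, ← map_mul φ.mapMatrix,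
      h]
  have hAdet : A'.det = (-A).charpoly := by
    rw [Matrix.charpoly, charmatrix, map_neg, sub_neg_eq_add]
  have hmonic : (A'.det ^ (m+1)).Monic := by
    rw [hAdet]; exact ((-A).charpoly_monic).pow _
  have hkey := key A' B' C' D' hcomm
  have heq : (Matrix.fromBlocks A' B' C' D').det = (D' * A' - C' * B').det :=
    hmonic.isRegular.left hkey
  have := congrArg (Polynomial.eval 0) heq
  rw [← Polynomial.coe_evalRingHom, (Polynomial.evalRingHom (0:R)).map_det,
      (Polynomial.evalRingHom (0:R)).map_det] at this
  have hmapA : (Polynomial.evalRingHom (0:R)).mapMatrix A' = A := by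
    ext i j
    simp [hA', hφ, Matrix.scalar_apply, Matrix.diagonal_apply, apply_ite]
  have hmapB : (Polynomial.evalRingHom (0:R)).mapMatrix B' = B := by ext i j; simp [hB', hφ]
  have hmapC : (Polynomial.evalRingHom (0:R)).mapMatrix C' = C := by ext i j; simp [hC', hφ]
  have hmapD : (Polynomial.evalRingHom (0:R)).mapMatrix D' = D := by ext i j; simp [hD', hφ]
  rwa [map_sub, _root_.map_mul ((Polynomial.evalRingHom (0:R)).mapMatrix), _root_.map_mul ((Polynomial.evalRingHom (0:R)).mapMatrix), hmapA, hmapB, hmapC, hmapD,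
    show ((Polynomial.evalRingHom (0:R)).mapMatrix (Matrix.fromBlocks A' B' C' D')) =
      Matrix.fromBlocks A B C D by
        rw [RingHom.mapMatrix_apply, Matrix.fromBlocks_map,
          ← RingHom.mapMatrix_apply, ← RingHom.mapMatrix_apply, ← RingHom.mapMatrix_apply,
          ← RingHom.mapMatrix_apply, hmapA, hmapB, hmapC, hmapD]] at this
end

section
/- Let R be a commutative ring and A, B, C, D be m×m matrices over R such that AB = BA, AC = CA, and BD = DB. Then the determinant of the block matrix [[A, B], [C, D]] equals det(AD − BC). -/
open Polynomial Matrix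

namespace DetBlockAux

variable {R : Type*} [CommRing R] {m : ℕ}

/-- Lift a matrix to `R[X]` and add `X • 1`. -/
noncomputable def lift (M : Matrix (Fin m) (Fin m) R) : Matrix (Fin m) (Fin m) R[X] :=
  M.map (Polynomial.C : R →+* R[X]) + (X : R[X]) • 1

theorem lift_monic (M : Matrix (Fin m) (Fin m) R) : (lift M).det.Monic := by
  have h := (-M).charpoly_monic
  unfold Matrix.charpoly Matrix.charmatrix at h
  convert h using 2
  ext i j
  simp [lift, Matrix.scalar, Matrix.one_apply, Matrix.diagonal_apply, RingHom.mapMatrix_apply,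
    Matrix.map_apply, sub_eq_add_neg, add_comm]

theorem lift_map_eval (M : Matrix (Fin m) (Fin m) R) :
    (lift M).map (Polynomial.evalRingHom (0 : R)) = M := by
  ext i j
  simp [lift, Matrix.map_apply, Matrix.one_apply, apply_ite]

end DetBlockAux

theorem det_fromBlocks_of_comm_AB_AC_BD {R : Type*} [CommRing R] {m : ℕ}
    (A B C D : Matrix (Fin m) (Fin m) R) (h1 : A * B = B * A) (h2 : A * C = C * A) (h3 : B * D = D * B) :
    (Matrix.fromBlocks A B C D).det = (A * D - B * C).det := by
  classical
  set ε := Polynomial.evalRingHom (0 : R) with hε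
  set A' := DetBlockAux.lift A
  set B' := B.map (Polynomial.C : R →+* R[X])
  set C' := C.map (Polynomial.C : R →+* R[X])
  set D' := DetBlockAux.lift D
  -- lifted commutation hypotheses
  have hCmap : ∀ M N : Matrix (Fin m) (Fin m) R, M * N = N * M →
      M.map (Polynomial.C : R →+* R[X]) * N.map (Polynomial.C : R →+* R[X])
        = N.map (Polynomial.C : R →+* R[X]) * M.map (Polynomial.C : R →+* R[X]) := by
    intro M N h
    rw [← Matrix.map_mul, ← Matrix.map_mul, h]
  have h1' : A' * B' = B' * A' := by
    simp only [A', B', DetBlockAux.lift, add_mul, mul_add, smul_mul_assoc, mul_smul_comm,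
      one_mul, mul_one, hCmap A B h1]
  have h2' : A' * C' = C' * A' := by
    simp only [A', C', DetBlockAux.lift, add_mul, mul_add, smul_mul_assoc, mul_smul_comm,
      one_mul, mul_one, hCmap A C h2]
  have h3' : B' * D' = D' * B' := by
    simp only [B', D', DetBlockAux.lift, add_mul, mul_add, smul_mul_assoc, mul_smul_comm,
      one_mul, mul_one, hCmap B D h3]
  -- Step 1: det M' = det (D'A' - B'C'), using left multiplication by [[D', -B'],[0,1]]
  have key1 : Matrix.fromBlocks D' (-B') 0 1 * Matrix.fromBlocks A' B' C' D'
      = Matrix.fromBlocks (D' * A' - B' * C') 0 C' D' := by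
    rw [Matrix.fromBlocks_multiply]
    congr 1 <;> simp [h3', sub_eq_add_neg]
  have hd1 := congrArg Matrix.det key1
  rw [Matrix.det_mul, Matrix.det_fromBlocks_zero₂₁, Matrix.det_fromBlocks_zero₁₂,
    Matrix.det_one, mul_one] at hd1
  -- hd1 : det D' * det M' = det (D'A' - B'C') * det D'
  have hDreg : IsRegular D'.det := (DetBlockAux.lift_monic D).isRegular
  have step1 : (Matrix.fromBlocks A' B' C' D').det = (D' * A' - B' * C').det :=
    hDreg.left (show D'.det * (Matrix.fromBlocks A' B' C' D').det
      = D'.det * (D' * A' - B' * C').det by rw [hd1, mul_comm])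
  -- Step 2: det (A'D' - B'C') = det (D'A' - B'C')
  have key2 : (A' * D' - B' * C') * A' = A' * (D' * A' - B' * C') := by
    have h : B' * C' * A' = A' * (B' * C') := by
      rw [mul_assoc, ← h2', ← mul_assoc, ← h1', mul_assoc]
    rw [sub_mul, mul_sub, mul_assoc, h]
  have hd2 := congrArg Matrix.det key2
  rw [Matrix.det_mul, Matrix.det_mul] at hd2
  have hAreg : IsRegular A'.det := (DetBlockAux.lift_monic A).isRegular
  have step2 : (A' * D' - B' * C').det = (D' * A' - B' * C').det :=
    hAreg.left (show A'.det * (A' * D' - B' * C').det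
      = A'.det * (D' * A' - B' * C').det by rw [← hd2, mul_comm])
  -- Combine and evaluate at X = 0
  have main : (Matrix.fromBlocks A' B' C' D').det = (A' * D' - B' * C').det := by
    rw [step1, step2]
  have := congrArg ε main
  rw [RingHom.map_det, RingHom.map_det] at this
  have eA : A'.map ε = A := DetBlockAux.lift_map_eval A
  have eD : D'.map ε = D := DetBlockAux.lift_map_eval D
  have eB : B'.map ε = B := by ext i j; simp [B', Matrix.map_apply, hε]
  have eC : C'.map ε = C := by ext i j; simp [C', Matrix.map_apply, hε]
  have eblocks : ε.mapMatrix (Matrix.fromBlocks A' B' C' D') = Matrix.fromBlocks A B C D := by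
    rw [RingHom.mapMatrix_apply, Matrix.fromBlocks_map, eA, eB, eC, eD]
  have esub : ε.mapMatrix (A' * D' - B' * C') = A * D - B * C := by
    rw [map_sub, _root_.map_mul ε.mapMatrix, _root_.map_mul ε.mapMatrix, RingHom.mapMatrix_apply, RingHom.mapMatrix_apply,
      RingHom.mapMatrix_apply, RingHom.mapMatrix_apply, eA, eB, eC, eD]
  rw [eblocks, esub] at this
  exact this
end

section
/- Let R be a commutative ring and A, B, C, D be m×m matrices over R such that AD = DA and BD = DB. Then the determinant of the block matrix [[A, B], [C, D]] equals det(AD − BC). -/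
/-!
If `D` commutes with `B`, then left multiplication by `[[D, -B], [0, 1]]` makes the block matrix
block lower triangular, so `det D * det [[A, B], [C, D]] = det D * det (D A - B C)`. This cancels
`det D` whenever it is a non-zero-divisor. In general, replace `D` by `X • 1 + D` over `R[X]`:
its determinant is the characteristic polynomial of `-D`, which is monic, and the commutation
hypotheses survive. Evaluating the resulting polynomial identity at `X = 0` gives the theorem.
-/

open Matrix Polynomial

namespace Matrix

theorem map_eval_zero_map_C {m n R : Type*} [Semiring R] (M : Matrix m n R) :
    (M.map Polynomial.C).map (eval 0) = M := by
  ext i j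
  simp

variable {n R : Type*} [Fintype n] [DecidableEq n] [CommRing R]

theorem det_fromBlocks_mul_det_of_commute (A B C D : Matrix n n R) (hBD : Commute B D) :
    (fromBlocks A B C D).det * D.det = (D * A - B * C).det * D.det := by
  have hmul : fromBlocks D (-B) 0 1 * fromBlocks A B C D = fromBlocks (D * A - B * C) 0 C D := by
    simp [fromBlocks_multiply, hBD.eq, sub_eq_add_neg]
  have := congrArg det hmul
  rwa [det_mul, det_fromBlocks_zero₂₁, det_fromBlocks_zero₁₂, det_one, mul_one, mul_comm] at this

theorem det_fromBlocks_of_commute_of_isRightRegular (A B C D : Matrix n n R)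
    (hAD : Commute A D) (hBD : Commute B D) (hD : IsRightRegular D.det) :
    (fromBlocks A B C D).det = (A * D - B * C).det :=
  hD <| by simpa only [hAD.eq] using det_fromBlocks_mul_det_of_commute A B C D hBD

theorem commute_map_C_charmatrix {M N : Matrix n n R} (h : Commute M N) :
    Commute (M.map Polynomial.C) (charmatrix N) :=
  ((scalar_commute _ (Commute.all _) _).symm).sub_right (h.map Polynomial.C.mapMatrix)

theorem map_eval_zero_charmatrix (M : Matrix n n R) : (charmatrix M).map (eval 0) = -M := by
  ext i j
  obtain rfl | hij := eq_or_ne i j <;> simp [*]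

end Matrix

theorem det_fromBlocks_of_comm_AD_BD {R : Type*} [CommRing R] {m : ℕ}
    (A B C D : Matrix (Fin m) (Fin m) R) (h1 : A * D = D * A) (h2 : B * D = D * B) :
    (Matrix.fromBlocks A B C D).det = (A * D - B * C).det := by
  have hX := det_fromBlocks_of_commute_of_isRightRegular (A.map Polynomial.C)
    (B.map Polynomial.C) (C.map Polynomial.C) (charmatrix (-D))
    (commute_map_C_charmatrix (Commute.neg_right h1))
    (commute_map_C_charmatrix (Commute.neg_right h2))
    (charpoly_monic (-D)).isRegular.right
  have h0 := congrArg (evalRingHom 0) hX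
  rw [RingHom.map_det, RingHom.map_det, map_sub, map_mul, map_mul] at h0
  simpa only [RingHom.mapMatrix_apply, coe_evalRingHom, fromBlocks_map, map_eval_zero_map_C,
    map_eval_zero_charmatrix, neg_neg] using h0
end

section
/- Let R be a commutative ring and A, B, C, D be m×m matrices over R such that AC = CA and BC = CB. Then the determinant of the block matrix [[A, B], [C, D]] equals det(AD − BC). -/
open Matrix Polynomial

private lemma key_det_mul {R : Type*} [CommRing R] {m : ℕ}
    (A B C D : Matrix (Fin m) (Fin m) R) (h1 : A * C = C * A) (h2 : B * C = C * B) :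
    A.det * (Matrix.fromBlocks A B C D).det = A.det * (A * D - B * C).det := by
  have hmul : Matrix.fromBlocks 1 0 (-C) A * Matrix.fromBlocks A B C D
      = Matrix.fromBlocks A B 0 (A * D - B * C) := by
    rw [Matrix.fromBlocks_multiply]
    simp [Matrix.neg_mul, h1, ← h2, neg_add_eq_sub]
  have := congrArg Matrix.det hmul
  rwa [Matrix.det_mul, Matrix.det_fromBlocks_zero₁₂, Matrix.det_fromBlocks_zero₂₁,
    Matrix.det_one, one_mul] at this

theorem det_fromBlocks_of_comm_AC_BC {R : Type*} [CommRing R] {m : ℕ}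
    (A B C D : Matrix (Fin m) (Fin m) R) (h1 : A * C = C * A) (h2 : B * C = C * B) :
    (Matrix.fromBlocks A B C D).det = (A * D - B * C).det := by
  -- lift to R[X]
  let f : R →+* R[X] := Polynomial.C
  let A' : Matrix (Fin m) (Fin m) R[X] := Matrix.scalar (Fin m) X + A.map f
  let B' := B.map f
  let C' := C.map f
  let D' := D.map f
  have hscalar : ∀ M : Matrix (Fin m) (Fin m) R[X],
      Matrix.scalar (Fin m) X * M = M * Matrix.scalar (Fin m) X := by
    intro M
    exact (Matrix.scalar_commute X (fun r => Commute.all _ _) M)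
  have h1' : A' * C' = C' * A' := by
    simp only [A', C', add_mul, mul_add, hscalar, ← Matrix.map_mul, h1]
  have h2' : B' * C' = C' * B' := by
    simp only [B', C', ← Matrix.map_mul, h2]
  have hA' : A' = Matrix.charmatrix (-A) := by
    have : (-A).map f = -(A.map f) := by ext i j; simp
    simp [A', Matrix.charmatrix, sub_eq_add_neg, this, f]
  have hreg : IsRegular A'.det := by
    rw [hA']
    exact (Matrix.charpoly_monic (-A)).isRegular
  have key := key_det_mul A' B' C' D' h1' h2'
  have e : (Matrix.fromBlocks A' B' C' D').det = (A' * D' - B' * C').det :=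
    hreg.left key
  -- evaluate at 0
  have this := congrArg (Polynomial.eval 0) e
  rw [← Polynomial.coe_evalRingHom, RingHom.map_det, RingHom.map_det,
    RingHom.mapMatrix_apply, RingHom.mapMatrix_apply] at this
  have hA0 : A'.map (Polynomial.evalRingHom 0) = A := by
    ext i j
    by_cases h : i = j <;>
      simp [A', Matrix.scalar_apply, Matrix.diagonal_apply, h, f]
  have hB0 : B'.map (Polynomial.evalRingHom 0) = B := by ext i j; simp [B', f]
  have hC0 : C'.map (Polynomial.evalRingHom 0) = C := by ext i j; simp [C', f]
  have hD0 : D'.map (Polynomial.evalRingHom 0) = D := by ext i j; simp [D', f]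
  rw [Matrix.fromBlocks_map, Matrix.map_sub _ (fun a b => map_sub (Polynomial.evalRingHom 0) a b),
    Matrix.map_mul, Matrix.map_mul,
    hA0, hB0, hC0, hD0] at this
  exact this
end

section
/- Let A be a (not necessarily commutative) ring and X an n×n matrix over A such that any two entries X_{ij}, X_{kl} with i ≠ 1, k ≠ 1, and j ≠ l commute. Then the first Laplace expansion identity holds for the row-determinant: Σ_j X_{1j} · Cof^{1j} X = Det X, where Det is the row-determinant Σ_π sgn(π) X_{1,π(1)}···X_{n,π(n)} and Cof^{1j} X = (−1)^{1+j} times the row-determinant of X with row 1 and column j deleted. -/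
theorem laplace_first_row_rowDet {A : Type*} [Ring A] {n : ℕ}
    (X : Matrix (Fin (n + 1)) (Fin (n + 1)) A)
    (hX : ∀ i k j l : Fin (n + 1), i ≠ 0 → k ≠ 0 → j ≠ l → Commute (X i j) (X k l)) :
    ∑ j : Fin (n + 1), X 0 j *
        ((-1 : A) ^ (j : ℕ) *
          rowDet (X.submatrix (Fin.succAbove 0) (Fin.succAbove j))) =
      rowDet X := by
  classical
  set F : Fin (n + 1) × Equiv.Perm (Fin n) → Equiv.Perm (Fin (n + 1)) :=
    fun p => (Fin.cycleRange p.1)⁻¹ * Equiv.Perm.decomposeFin.symm (0, p.2) with hF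
  have hF0 : ∀ (j : Fin (n + 1)) (σ : Equiv.Perm (Fin n)), F (j, σ) 0 = j := by
    intro j σ
    simp [hF, Equiv.Perm.mul_apply, Equiv.Perm.inv_def]
  have hFs : ∀ (j : Fin (n + 1)) (σ : Equiv.Perm (Fin n)) (i : Fin n),
      F (j, σ) i.succ = j.succAbove (σ i) := by
    intro j σ i
    simp [hF, Equiv.Perm.mul_apply, Equiv.Perm.inv_def]
  have hFinj : Function.Injective F := by
    rintro ⟨j, σ⟩ ⟨j', σ'⟩ h
    have hj : j = j' := by rw [← hF0 j σ, ← hF0 j' σ', h]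
    subst hj
    have h2 : Equiv.Perm.decomposeFin.symm (0, σ) = Equiv.Perm.decomposeFin.symm (0, σ') :=
      mul_left_cancel h
    have h3 := Equiv.Perm.decomposeFin.symm.injective h2
    simp only [Prod.mk.injEq] at h3
    simp [h3.2]
  have hFbij : Function.Bijective F := by
    rw [Fintype.bijective_iff_injective_and_card]
    refine ⟨hFinj, ?_⟩
    simp [Fintype.card_perm, Nat.factorial_succ]
  have hsign : ∀ (j : Fin (n + 1)) (σ : Equiv.Perm (Fin n)),
      (Equiv.Perm.sign (F (j, σ)) : ℤ) = (-1) ^ (j : ℕ) * (Equiv.Perm.sign σ : ℤ) := by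
    intro j σ
    simp [hF, Fin.sign_cycleRange]
  have key : rowDet X = ∑ p : Fin (n + 1) × Equiv.Perm (Fin n),
      ((Equiv.Perm.sign (F p) : ℤ) • (List.ofFn fun i => X i (F p i)).prod) :=
    (Fintype.sum_bijective F hFbij _ _ fun p => rfl).symm
  rw [key, Fintype.sum_prod_type]
  refine Finset.sum_congr rfl fun j _ => ?_
  rw [rowDet, Finset.mul_sum, Finset.mul_sum]
  refine Finset.sum_congr rfl fun σ _ => ?_
  rw [List.ofFn_succ, List.prod_cons, hF0, hsign]
  have hprod : (List.ofFn fun i : Fin n => X i.succ (F (j, σ) i.succ)).prod =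
      (List.ofFn fun i : Fin n =>
        (X.submatrix (Fin.succAbove 0) (Fin.succAbove j)) i (σ i)).prod := by
    congr 1
    refine congrArg List.ofFn (funext fun i => ?_)
    rw [hFs]
    simp [Matrix.submatrix_apply]
  rw [hprod]
  set P := (List.ofFn fun i : Fin n =>
    (X.submatrix (Fin.succAbove 0) (Fin.succAbove j)) i (σ i)).prod with hP
  have hcomm : Commute ((-1 : A) ^ (j : ℕ)) (X 0 j) :=
    (Commute.neg_one_left (X 0 j)).pow_left _
  calc X 0 j * ((-1 : A) ^ (j : ℕ) * ((Equiv.Perm.sign σ : ℤ) • P))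
      = (-1 : A) ^ (j : ℕ) * (X 0 j * ((Equiv.Perm.sign σ : ℤ) • P)) := by
        rw [← mul_assoc, ← hcomm.eq, mul_assoc]
    _ = (-1 : A) ^ (j : ℕ) * ((Equiv.Perm.sign σ : ℤ) • (X 0 j * P)) := by
        rw [mul_smul_comm]
    _ = ((-1 : ℤ) ^ (j : ℕ)) • ((Equiv.Perm.sign σ : ℤ) • (X 0 j * P)) := by
        simp only [zsmul_eq_mul]; push_cast; ring
    _ = ((-1) ^ (j : ℕ) * (Equiv.Perm.sign σ : ℤ)) • (X 0 j * P) := by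
        rw [mul_smul]
end

section
/- Let A be a ring and X an n×n matrix over A such that any two entries X_{ij}, X_{kl} with i ≠ 1, k ≠ 1, and j ≠ l commute. Then for every row index i with 2 ≤ i ≤ n, the alien cofactor expansion vanishes: Σ_j X_{ij} · Cof^{1j} X = 0, where Cof^{1j} X is the (1,j) cofactor defined via the row-determinant. -/
open Equiv Finset in
/-- Laplace expansion of the row-determinant along row 0. -/
theorem rowDet_succ_row_zero {A : Type*} [Ring A] {n : ℕ}
    (X : Matrix (Fin (n + 1)) (Fin (n + 1)) A) :
    rowDet X = ∑ j : Fin (n + 1), X 0 j *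
      ((-1 : A) ^ (j : ℕ) * rowDet (X.submatrix Fin.succ (Fin.succAbove j))) := by
  rw [rowDet, Finset.univ_perm_fin_succ, ← Finset.univ_product_univ]
  simp only [Finset.sum_map, Equiv.toEmbedding_apply, Finset.sum_product]
  refine Finset.sum_congr rfl fun j _ => Fin.cases ?_ (fun jj => ?_) j
  · -- case j = 0
    simp only [rowDet, Matrix.submatrix_apply, Fin.succAbove_zero, Finset.mul_sum]
    refine Finset.sum_congr rfl fun σ _ => ?_
    rw [Equiv.Perm.decomposeFin.symm_sign, if_pos rfl, one_mul]
    rw [List.ofFn_succ]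
    simp only [Equiv.Perm.decomposeFin_symm_apply_zero,
      Equiv.Perm.decomposeFin_symm_apply_succ, Equiv.swap_self, Equiv.coe_refl, id,
      List.prod_cons]
    simp only [Fin.val_zero, pow_zero, one_mul, zsmul_eq_mul]
    rw [← mul_assoc, Int.cast_comm, mul_assoc]
  · -- case j = jj.succ
    rw [← Equiv.sum_comp (Equiv.mulLeft jj.cycleRange⁻¹)
      (fun y : Equiv.Perm (Fin n) =>
        (Equiv.Perm.sign (Equiv.Perm.decomposeFin.symm (jj.succ, y)) : ℤ)
        • (List.ofFn fun k => X k (Equiv.Perm.decomposeFin.symm (jj.succ, y) k)).prod)]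
    simp only [Equiv.coe_mulLeft]
    simp only [rowDet, Matrix.submatrix_apply, Finset.mul_sum]
    refine Finset.sum_congr rfl fun σ _ => ?_
    rw [Equiv.Perm.decomposeFin.symm_sign, if_neg (Fin.succ_ne_zero jj)]
    rw [List.ofFn_succ]
    simp only [Equiv.Perm.decomposeFin_symm_apply_zero,
      Equiv.Perm.decomposeFin_symm_apply_succ, List.prod_cons, Equiv.Perm.mul_apply]
    have hcyc : ∀ k : Fin n, Equiv.swap 0 jj.succ ((jj.cycleRange⁻¹ * σ) k).succ
        = jj.succ.succAbove (σ k) := by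
      intro k
      rw [← Fin.succAbove_cycleRange]
      simp [Equiv.Perm.mul_apply]
    simp only [Equiv.Perm.mul_apply] at hcyc
    simp only [hcyc]
    have hval : ((jj.succ : Fin (n + 1)) : ℕ) = (jj : ℕ) + 1 := Fin.val_succ jj
    have hw : ((-1 * Equiv.Perm.sign (jj.cycleRange⁻¹ * σ) : ℤˣ) : ℤ)
        = (-1) ^ ((jj : ℕ) + 1) * (Equiv.Perm.sign σ : ℤ) := by
      rw [Equiv.Perm.sign_mul, Equiv.Perm.sign_inv, Fin.sign_cycleRange]
      push_cast
      ring
    rw [hw, ← mul_smul_comm, mul_smul, hval]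
    congr 1
    rw [zsmul_eq_mul]
    push_cast
    ring_nf

open Equiv in
/-- A row-determinant with two equal rows vanishes, provided entries in distinct
columns pairwise commute. -/
theorem rowDet_eq_zero_of_eq_rows {A : Type*} [Ring A] {n : ℕ}
    (Y : Matrix (Fin n) (Fin n) A) (r s : Fin n) (hrs : r ≠ s) (hrow : Y r = Y s)
    (hc : ∀ k l j m : Fin n, j ≠ m → Commute (Y k j) (Y l m)) : rowDet Y = 0 := by
  rw [rowDet]
  refine Finset.sum_ninvolution (fun π => π * Equiv.swap r s) (fun π => ?_)
    (fun π _ => ?_) (fun π => Finset.mem_univ _) (fun π => ?_)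
  · -- f π + f (π * swap r s) = 0
    have hpair : ∀ π : Equiv.Perm (Fin n),
        (List.ofFn fun k => Y k (π k)).Pairwise Commute := by
      intro π
      rw [List.pairwise_ofFn]
      intro a b hab
      exact hc _ _ _ _ (fun h => hab.ne (π.injective h))
    have hprod : (List.ofFn fun k => Y k ((π * Equiv.swap r s) k)).prod
        = (List.ofFn fun k => Y k (π k)).prod := by
      have h1 : (fun k => Y k ((π * Equiv.swap r s) k))
          = (fun k => Y k (π k)) ∘ ⇑(Equiv.swap r s) := by
        funext k
        simp only [Function.comp_apply, Equiv.Perm.mul_apply]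
        rcases eq_or_ne k r with rfl | hkr
        · rw [Equiv.swap_apply_left]
          exact congrFun hrow _
        rcases eq_or_ne k s with rfl | hks
        · rw [Equiv.swap_apply_right]
          exact (congrFun hrow _).symm
        · rw [Equiv.swap_apply_of_ne_of_ne hkr hks]
      have hp0 : (List.ofFn (⇑(Equiv.swap r s))).Perm (List.finRange n) := by
        refine List.perm_of_nodup_nodup_toFinset_eq ?_ (List.nodup_finRange n) ?_
        · exact List.nodup_ofFn.mpr (Equiv.swap r s).injective
        · ext x
          simp only [List.mem_toFinset, List.mem_ofFn, List.mem_finRange, iff_true,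
            Set.mem_range]
          exact ⟨(Equiv.swap r s).symm x, Equiv.apply_symm_apply _ _⟩
      have hperm : (List.ofFn ((fun k => Y k (π k)) ∘ ⇑(Equiv.swap r s))).Perm
          (List.ofFn fun k => Y k (π k)) := by
        rw [← List.map_ofFn, List.ofFn_eq_map (f := fun k => Y k (π k))]
        exact hp0.map _
      rw [h1]
      exact hperm.prod_eq' (h1 ▸ hpair (π * Equiv.swap r s))
    have hsgn : Equiv.Perm.sign (π * Equiv.swap r s) = -Equiv.Perm.sign π := by
      rw [Equiv.Perm.sign_mul, Equiv.Perm.sign_swap hrs, mul_neg_one]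
    rw [hprod, hsgn]
    push_cast
    rw [neg_smul, add_neg_cancel]
  · -- π * swap ≠ π
    intro h
    have := congrFun (congrArg (fun e : Equiv.Perm (Fin n) => (e : Fin n → Fin n)) h) r
    simp only [Equiv.Perm.mul_apply, Equiv.swap_apply_left] at this
    exact hrs (π.injective this).symm
  · show π * Equiv.swap r s * Equiv.swap r s = π
    rw [mul_assoc, Equiv.swap_mul_self, mul_one]

theorem alien_cofactor_expansion_rowDet {A : Type*} [Ring A] {n : ℕ}
    (X : Matrix (Fin (n + 1)) (Fin (n + 1)) A)
    (hX : ∀ i k j l : Fin (n + 1), i ≠ 0 → k ≠ 0 → j ≠ l → Commute (X i j) (X k l))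
    (i : Fin (n + 1)) (hi : i ≠ 0) :
    ∑ j : Fin (n + 1), X i j *
        ((-1 : A) ^ (j : ℕ) *
          rowDet (X.submatrix (Fin.succAbove 0) (Fin.succAbove j))) = 0 := by
  set Y : Matrix (Fin (n + 1)) (Fin (n + 1)) A := X.updateRow 0 (X i) with hY
  have hY0 : Y 0 = X i := Matrix.updateRow_self
  have hYi : Y i = X i := Matrix.updateRow_ne hi
  have hminor : ∀ j : Fin (n + 1), Y.submatrix Fin.succ (Fin.succAbove j)
      = X.submatrix (Fin.succAbove 0) (Fin.succAbove j) := by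
    intro j
    ext k l
    simp [hY, Matrix.updateRow_ne (Fin.succ_ne_zero k), Fin.succAbove_zero]
  have key : rowDet Y = 0 := by
    refine rowDet_eq_zero_of_eq_rows Y 0 i hi.symm (hY0.trans hYi.symm) ?_
    intro k l j m hjm
    rcases eq_or_ne k 0 with rfl | hk
    · rcases eq_or_ne l 0 with rfl | hl
      · simp only [hY, Matrix.updateRow_self]
        exact hX i i j m hi hi hjm
      · simp only [hY, Matrix.updateRow_self, Matrix.updateRow_ne hl]
        exact hX i l j m hi hl hjm
    · rcases eq_or_ne l 0 with rfl | hl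
      · simp only [hY, Matrix.updateRow_self, Matrix.updateRow_ne hk]
        exact hX k i j m hk hi hjm
      · simp only [hY, Matrix.updateRow_ne hk, Matrix.updateRow_ne hl]
        exact hX k l j m hk hl hjm
  calc ∑ j : Fin (n + 1), X i j * ((-1 : A) ^ (j : ℕ) *
          rowDet (X.submatrix (Fin.succAbove 0) (Fin.succAbove j)))
      = ∑ j : Fin (n + 1), Y 0 j * ((-1 : A) ^ (j : ℕ) *
          rowDet (Y.submatrix Fin.succ (Fin.succAbove j))) := by
        refine Finset.sum_congr rfl fun j _ => ?_
        rw [hY0, hminor]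
    _ = rowDet Y := (rowDet_succ_row_zero Y).symm
    _ = 0 := key
end

section
/- Let R be a commutative ring, S a subring of M_m(R), and M an n×n matrix over S such that M_{ij} commutes with M_{kl} whenever i ≠ 1, k ≠ 1, and j ≠ l. Then det_R(Det_S M) = det_R M, where Det_S M is the row-determinant Σ_{π∈S_n} sgn(π) M_{1,π(1)}···M_{n,π(n)} and M is viewed as an mn×mn matrix over R via its blocks. -/
open Equiv Equiv.Perm Matrix

namespace Equiv.Perm

noncomputable def decomposeFinSuccAbove (n : ℕ) :
    Fin (n + 1) × Perm (Fin n) ≃ Perm (Fin (n + 1)) :=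
  Equiv.ofBijective (fun pσ => (decomposeFin.symm (0, pσ.2)).trans pσ.1.cycleRange.symm) <| by
    refine (Fintype.bijective_iff_injective_and_card _).2
      ⟨?_, by simp [Fintype.card_perm, Nat.factorial_succ]⟩
    rintro ⟨p, σ⟩ ⟨p', σ'⟩ h
    obtain rfl : p = p' := by simpa using congr($h 0)
    refine Prod.ext rfl (Equiv.ext fun x => ?_)
    simpa using congr($h x.succ)

variable {n : ℕ} (p : Fin (n + 1)) (σ : Perm (Fin n))

@[simp] lemma decomposeFinSuccAbove_apply_zero : decomposeFinSuccAbove n (p, σ) 0 = p := by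
  simp [decomposeFinSuccAbove]

@[simp] lemma decomposeFinSuccAbove_apply_succ (x : Fin n) :
    decomposeFinSuccAbove n (p, σ) x.succ = p.succAbove (σ x) := by
  simp [decomposeFinSuccAbove]

@[simp] lemma sign_decomposeFinSuccAbove :
    sign (decomposeFinSuccAbove n (p, σ)) = (-1) ^ (p : ℕ) * sign σ := by
  simp [decomposeFinSuccAbove, sign_trans, Fin.sign_cycleRange]

end Equiv.Perm

section RowDet

variable {A B : Type*} [Ring A] [Ring B] {n : ℕ}

lemma rowDet_map (f : A →+* B) (X : Matrix (Fin n) (Fin n) A) :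
    rowDet (X.map f) = f (rowDet X) := by
  simp [rowDet, map_list_prod, List.map_ofFn, Function.comp_def]

lemma rowDet_eq_zero_of_row_eq (X : Matrix (Fin n) (Fin n) A) {i i' : Fin n} (hii' : i ≠ i')
    (hrow : X i = X i') (hX : ∀ r s c d, c ≠ d → Commute (X r c) (X s d)) :
    rowDet X = 0 := by
  refine Finset.sum_ninvolution (fun π => π * swap i i') (fun π => ?_) (fun π _ => ?_)
    (fun _ => Finset.mem_univ _) (fun π => by simp [mul_assoc])
  · have hprod : (List.ofFn fun r => X r ((π * swap i i') r)) =
        List.ofFn ((fun r => X r (π r)) ∘ swap i i') := by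
      congr 1; funext r
      rcases eq_or_ne r i with rfl | hri
      · simp [hrow]
      rcases eq_or_ne r i' with rfl | hri'
      · simp [hrow]
      · simp [swap_apply_of_ne_of_ne hri hri']
    rw [hprod, ← ((swap i i').ofFn_comp_perm _).symm.prod_eq' (List.pairwise_ofFn.2
      fun a b hab => hX _ _ _ _ (π.injective.ne (ne_of_lt hab))), Perm.sign_mul, sign_swap hii']
    simp
  · simpa [swap_eq_one_iff] using hii'

def rowCofactor (M : Matrix (Fin (n + 1)) (Fin (n + 1)) A) (j : Fin (n + 1)) : A :=
  ((-1) ^ (j : ℕ) : ℤ) • rowDet (M.submatrix Fin.succ j.succAbove)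

lemma rowDet_succ_row_zero_s16 (M : Matrix (Fin (n + 1)) (Fin (n + 1)) A) :
    rowDet M = ∑ j, M 0 j * rowCofactor M j := by
  rw [rowDet, ← (decomposeFinSuccAbove n).sum_comp, Fintype.sum_prod_type]
  refine Finset.sum_congr rfl fun p _ => ?_
  simp only [rowCofactor, rowDet, Finset.smul_sum, Finset.mul_sum]
  refine Finset.sum_congr rfl fun σ _ => ?_
  rw [List.ofFn_succ, List.prod_cons]
  simp only [decomposeFinSuccAbove_apply_zero, decomposeFinSuccAbove_apply_succ,
    sign_decomposeFinSuccAbove, Matrix.submatrix_apply]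
  push_cast
  rw [mul_smul, mul_smul_comm, mul_smul_comm]

lemma sum_mul_rowCofactor_eq_zero (M : Matrix (Fin (n + 1)) (Fin (n + 1)) A)
    (hM : ∀ i k j l, i ≠ 0 → k ≠ 0 → j ≠ l → Commute (M i j) (M k l))
    {i : Fin (n + 1)} (hi : i ≠ 0) : ∑ j, M i j * rowCofactor M j = 0 := by
  set ρ : Fin (n + 1) → Fin (n + 1) := Function.update id 0 i
  have hρ : ∀ r, ρ r ≠ 0 := fun r => by
    rcases eq_or_ne r 0 with rfl | hr <;> simp [ρ, Function.update_of_ne, *]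
  have hsucc : ρ ∘ Fin.succ = Fin.succ :=
    funext fun a => Function.update_of_ne a.succ_ne_zero _ _
  have hcof : rowCofactor (M.submatrix ρ id) = rowCofactor M := by
    funext j
    simp only [rowCofactor, submatrix_submatrix, Function.id_comp, hsucc]
  calc ∑ j, M i j * rowCofactor M j = rowDet (M.submatrix ρ id) := by
        rw [rowDet_succ_row_zero_s16, hcof]; simp [ρ]
    _ = 0 := rowDet_eq_zero_of_row_eq _ hi.symm (by ext; simp [ρ, Function.update_of_ne hi])
        fun r s c d hcd => hM _ _ _ _ (hρ r) (hρ s) hcd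

lemma mulVec_rowCofactor (M : Matrix (Fin (n + 1)) (Fin (n + 1)) A)
    (hM : ∀ i k j l, i ≠ 0 → k ≠ 0 → j ≠ l → Commute (M i j) (M k l)) :
    M *ᵥ rowCofactor M = Pi.single 0 (rowDet M) := by
  funext i
  rcases eq_or_ne i 0 with rfl | hi
  · simp [Matrix.mulVec, dotProduct, rowDet_succ_row_zero_s16]
  · simp [Matrix.mulVec, dotProduct, sum_mul_rowCofactor_eq_zero M hM hi, hi]

end RowDet

lemma submatrix_succ_updateCol_zero {α β : Type*} {k : ℕ} (X : Matrix β (Fin (k + 1)) α)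
    (v : β → α) (f : Fin k → β) :
    (X.updateCol 0 v).submatrix f Fin.succ = X.submatrix f Fin.succ :=
  submatrix_updateCol_succAbove X v f 0

section Blocks

variable {R : Type*} {ι : Type*} [Fintype ι] [DecidableEq ι] {n : ℕ}

def finSuccProdEquiv (n : ℕ) (ι : Type*) : ι ⊕ (Fin n × ι) ≃ Fin (n + 1) × ι where
  toFun := Sum.elim (fun a => (0, a)) fun x => (x.1.succ, x.2)
  invFun p := Fin.cases (Sum.inl p.2) (fun j => Sum.inr (j, p.2)) p.1
  left_inv := by rintro (a | ⟨i, a⟩) <;> simp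
  right_inv := by
    rintro ⟨i, a⟩
    refine Fin.cases ?_ (fun j => ?_) i <;> simp

omit [DecidableEq ι] in
lemma compRingEquiv_submatrix_finSuccProdEquiv [CommRing R]
    (P : Matrix (Fin (n + 1)) (Fin (n + 1)) (Matrix ι ι R)) :
    (compRingEquiv _ _ _ P).submatrix (finSuccProdEquiv n ι) (finSuccProdEquiv n ι) =
      fromBlocks (P 0 0) (of fun a x => P 0 x.1.succ a x.2) (of fun x b => P x.1.succ 0 x.2 b)
        (compRingEquiv _ _ _ (P.submatrix Fin.succ Fin.succ)) := by
  ext (a | ⟨i, a⟩) (b | ⟨j, b⟩) <;> rfl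

variable [CommRing R]

lemma det_compRingEquiv_of_apply_zero_eq_zero
    (P : Matrix (Fin (n + 1)) (Fin (n + 1)) (Matrix ι ι R)) (h : ∀ i, i ≠ 0 → P i 0 = 0) :
    (compRingEquiv _ _ _ P).det =
      (P 0 0).det * (compRingEquiv _ _ _ (P.submatrix Fin.succ Fin.succ)).det := by
  have hcol : (of fun x b => P x.1.succ 0 x.2 b : Matrix (Fin n × ι) ι R) = 0 := by
    ext x b; simp [h _ x.1.succ_ne_zero]
  rw [← det_submatrix_equiv_self (finSuccProdEquiv n ι),
    compRingEquiv_submatrix_finSuccProdEquiv, hcol, det_fromBlocks_zero₂₁]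

lemma det_compRingEquiv_of_zero_apply_eq_zero
    (P : Matrix (Fin (n + 1)) (Fin (n + 1)) (Matrix ι ι R)) (h : ∀ j, j ≠ 0 → P 0 j = 0) :
    (compRingEquiv _ _ _ P).det =
      (P 0 0).det * (compRingEquiv _ _ _ (P.submatrix Fin.succ Fin.succ)).det := by
  have hrow : (of fun a x => P 0 x.1.succ a x.2 : Matrix ι (Fin n × ι) R) = 0 := by
    ext a x; simp [h _ x.1.succ_ne_zero]
  rw [← det_submatrix_equiv_self (finSuccProdEquiv n ι),
    compRingEquiv_submatrix_finSuccProdEquiv, hrow, det_fromBlocks_zero₁₂]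

lemma det_compRingEquiv_mul_det_rowDet_submatrix
    (M : Matrix (Fin (n + 1)) (Fin (n + 1)) (Matrix ι ι R))
    (hM : ∀ i k j l, i ≠ 0 → k ≠ 0 → j ≠ l → Commute (M i j) (M k l)) :
    (compRingEquiv _ _ _ M).det * (rowDet (M.submatrix Fin.succ Fin.succ)).det =
      (rowDet M).det * (compRingEquiv _ _ _ (M.submatrix Fin.succ Fin.succ)).det := by
  set N := (1 : Matrix (Fin (n + 1)) (Fin (n + 1)) (Matrix ι ι R)).updateCol 0 (rowCofactor M)
  have hN : (compRingEquiv _ _ _ N).det = (rowDet (M.submatrix Fin.succ Fin.succ)).det := by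
    have hN1 : N.submatrix Fin.succ Fin.succ = 1 :=
      (submatrix_succ_updateCol_zero _ _ _).trans (submatrix_one _ (Fin.succ_injective _))
    rw [det_compRingEquiv_of_zero_apply_eq_zero N
      fun j hj => by simp [N, updateCol_ne hj, hj.symm], hN1, map_one, det_one, mul_one]
    simp [N, rowCofactor]
  have hMN : (compRingEquiv _ _ _ (M * N)).det =
      (rowDet M).det * (compRingEquiv _ _ _ (M.submatrix Fin.succ Fin.succ)).det := by
    rw [mul_updateCol, mul_one, mulVec_rowCofactor M hM,
      det_compRingEquiv_of_apply_zero_eq_zero _ fun i hi => by simp [updateCol_self, hi],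
      submatrix_succ_updateCol_zero]
    simp
  rw [← hN, ← det_mul, ← map_mul, hMN]

end Blocks

open Polynomial

section ShiftX

variable {R : Type*} [CommRing R] {κ ι : Type*} [Fintype κ] [DecidableEq κ] [Fintype ι]
  [DecidableEq ι]

noncomputable def shiftX (P : Matrix κ κ (Matrix ι ι R)) : Matrix κ κ (Matrix ι ι R[X]) :=
  P.map (C : R →+* R[X]).mapMatrix + algebraMap R[X] _ X

lemma commute_shiftX_apply (P : Matrix κ κ (Matrix ι ι R)) {i j k l : κ}
    (h : Commute (P i j) (P k l)) : Commute (shiftX P i j) (shiftX P k l) := by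
  have hX : ∀ i j y, Commute ((algebraMap R[X] (Matrix κ κ (Matrix ι ι R[X])) X) i j) y := by
    intro i j y
    rw [algebraMap_matrix_apply]
    split_ifs
    · exact Algebra.commute_algebraMap_left _ _
    · exact Commute.zero_left _
  simp only [shiftX, Matrix.add_apply, map_apply]
  exact ((h.map (C : R →+* R[X]).mapMatrix).add_right (hX _ _ _).symm).add_left
    ((hX _ _ _).add_right (hX _ _ _))

lemma submatrix_shiftX {κ' : Type*} [Fintype κ'] [DecidableEq κ']
    (P : Matrix κ κ (Matrix ι ι R)) {e : κ' → κ} (he : Function.Injective e) :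
    (shiftX P).submatrix e e = shiftX (P.submatrix e e) := by
  ext i j : 2
  simp [shiftX, algebraMap_matrix_apply, he.eq_iff]

lemma map_shiftX_eval_zero (P : Matrix κ κ (Matrix ι ι R)) :
    (shiftX P).map (evalRingHom 0).mapMatrix = P := by
  ext i j a b
  by_cases hij : i = j <;> by_cases hab : a = b <;>
    simp [shiftX, algebraMap_matrix_apply, hij, hab]

lemma compRingEquiv_shiftX (P : Matrix κ κ (Matrix ι ι R)) :
    compRingEquiv _ _ _ (shiftX P) = charmatrix (-compRingEquiv _ _ _ P) := by
  rw [shiftX, map_add, add_comm, charmatrix, map_neg, sub_neg_eq_add]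
  congr 1
  exact (compAlgEquiv κ ι R[X] R[X]).commutes X

lemma monic_det_compRingEquiv_shiftX (P : Matrix κ κ (Matrix ι ι R)) :
    (compRingEquiv _ _ _ (shiftX P)).det.Monic := by
  rw [compRingEquiv_shiftX]
  exact charpoly_monic _

end ShiftX

theorem det_rowDet_eq_det_compRingEquiv {ι : Type*} [Fintype ι] [DecidableEq ι] (n : ℕ)
    {R : Type*} [CommRing R] (M : Matrix (Fin (n + 1)) (Fin (n + 1)) (Matrix ι ι R))
    (hM : ∀ i k j l, i ≠ 0 → k ≠ 0 → j ≠ l → Commute (M i j) (M k l)) :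
    (rowDet M).det = (compRingEquiv _ _ _ M).det := by
  induction n generalizing R with
  | zero =>
    simpa [rowDet, det_isEmpty] using (det_compRingEquiv_mul_det_rowDet_submatrix M hM).symm
  | succ n ih =>
    have hM' :
        ∀ i k j l, i ≠ 0 → k ≠ 0 → j ≠ l → Commute (shiftX M i j) (shiftX M k l) :=
      fun i k j l hi hk hjl => commute_shiftX_apply M (hM i k j l hi hk hjl)
    have hminor := ih ((shiftX M).submatrix Fin.succ Fin.succ) fun i k j l _ _ hjl =>
      hM' _ _ _ _ i.succ_ne_zero k.succ_ne_zero (Fin.succ_injective _ |>.ne hjl)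
    have hmonic : (compRingEquiv _ _ _ ((shiftX M).submatrix Fin.succ Fin.succ)).det.Monic := by
      rw [submatrix_shiftX _ (Fin.succ_injective _)]
      exact monic_det_compRingEquiv_shiftX _
    have hshift : (rowDet (shiftX M)).det = (compRingEquiv _ _ _ (shiftX M)).det := by
      have h := det_compRingEquiv_mul_det_rowDet_submatrix _ hM'
      rw [hminor] at h
      exact (hmonic.isRegular.right h).symm
    have heval := congr(evalRingHom 0 $hshift)
    rw [RingHom.map_det, RingHom.map_det, ← rowDet_map, map_shiftX_eval_zero] at heval
    exact heval.trans (congrArg (fun P => (compRingEquiv _ _ _ P).det) (map_shiftX_eval_zero M))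

theorem det_rowDet_blocks_of_F {R : Type*} [CommRing R] {m n : ℕ}
    (S : Subring (Matrix (Fin m) (Fin m) R))
    (M : Matrix (Fin (n + 1)) (Fin (n + 1)) S)
    (hM : ∀ i k j l : Fin (n + 1), i ≠ 0 → k ≠ 0 → j ≠ l → Commute (M i j) (M k l)) :
    Matrix.det ((rowDet M : S) : Matrix (Fin m) (Fin m) R) =
      Matrix.det (Matrix.of fun p q : Fin (n + 1) × Fin m =>
        ((M p.1 q.1 : Matrix (Fin m) (Fin m) R)) p.2 q.2) := by
  have h := det_rowDet_eq_det_compRingEquiv n (M.map S.subtype)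
    fun i k j l hi hk hjl => (hM i k j l hi hk hjl).map S.subtype
  rwa [rowDet_map] at h
end
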